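/- arXiv:2501.06889 — 5 statements merged into one kernel-verified Lean document; each statement's English description precedes it below -/
import Mathlib

section
/- For every integer a ≥ 7, the polynomial f_a(X) = X³ − aX² − (a+3)X − 1 has three distinct real roots ρ > ρ'' > ρ', and they satisfy a + 1 < ρ < a + 1 + 2/a, −1 − 1/a < ρ' < −1 − 1/(2a), and −1/(a+2) < ρ'' < −1/(a+3). Moreover, if a ≥ 8, then a² < ρ² < 2a², 1 < (ρ')² < 2, and 1/(2a²) < (ρ'')² < 1/a². -/
/-!
After clearing denominators, the signs of `f_a` at the endpoints of the three intervals are those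
of explicit polynomials in `a`, so the intermediate value theorem puts a root in each interval.
The intervals are disjoint, hence these are all the roots of the cubic, and the bounds on the
squares are read off from the intervals.
-/

open Set

def simplestCubic (a x : ℝ) : ℝ := x ^ 3 - a * x ^ 2 - (a + 3) * x - 1

section SimplestCubic

variable {a : ℝ}

theorem continuous_simplestCubic (a : ℝ) : Continuous (simplestCubic a) := by
  unfold simplestCubic; fun_prop

theorem simplestCubic_add_one_neg (ha : 0 < a) : simplestCubic a (a + 1) < 0 := by
  have : simplestCubic a (a + 1) = -(2 * a + 3) := by unfold simplestCubic; ring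
  rw [this]; linarith

theorem simplestCubic_add_one_add_two_div_pos (ha : 0 < a) :
    0 < simplestCubic a (a + 1 + 2 / a) := by
  have : simplestCubic a (a + 1 + 2 / a) = (3 * a ^ 3 + 8 * a ^ 2 + 12 * a + 8) / a ^ 3 := by
    unfold simplestCubic; field_simp; ring
  rw [this]; positivity

theorem simplestCubic_neg_one_sub_one_div_neg (ha : 0 < a) :
    simplestCubic a (-1 - 1 / a) < 0 := by
  have : simplestCubic a (-1 - 1 / a) = -(a ^ 2 + 3 * a + 1) / a ^ 3 := by
    unfold simplestCubic; field_simp; ring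
  rw [this]; exact div_neg_of_neg_of_pos (by nlinarith) (by positivity)

theorem simplestCubic_neg_one_sub_one_div_two_mul_pos (ha : 2 ≤ a) :
    0 < simplestCubic a (-1 - 1 / (2 * a)) := by
  have : simplestCubic a (-1 - 1 / (2 * a)) =
      (4 * a ^ 3 - 2 * a ^ 2 - 6 * a - 1) / (8 * a ^ 3) := by
    unfold simplestCubic; field_simp; ring
  rw [this]; exact div_pos (by nlinarith) (by positivity)

theorem simplestCubic_neg_one_div_add_two_pos (ha : 0 < a) :
    0 < simplestCubic a (-(1 / (a + 2))) := by
  have : simplestCubic a (-(1 / (a + 2))) = (2 * a + 3) / (a + 2) ^ 3 := by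
    have : a + 2 ≠ 0 := by positivity
    unfold simplestCubic; field_simp; ring
  rw [this]; positivity

theorem simplestCubic_neg_one_div_add_three_neg (ha : 0 < a) :
    simplestCubic a (-(1 / (a + 3))) < 0 := by
  have : simplestCubic a (-(1 / (a + 3))) = -(a ^ 2 + 3 * a + 1) / (a + 3) ^ 3 := by
    have : a + 3 ≠ 0 := by positivity
    unfold simplestCubic; field_simp; ring
  rw [this]; exact div_neg_of_neg_of_pos (by nlinarith) (by positivity)

theorem exists_simplestCubic_eq_zero_mem_Ioo_add_one (ha : 0 < a) :
    ∃ x ∈ Ioo (a + 1) (a + 1 + 2 / a), simplestCubic a x = 0 :=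
  intermediate_value_Ioo (le_add_of_nonneg_right (by positivity))
    (continuous_simplestCubic a).continuousOn
    ⟨simplestCubic_add_one_neg ha, simplestCubic_add_one_add_two_div_pos ha⟩

theorem exists_simplestCubic_eq_zero_mem_Ioo_neg_one (ha : 2 ≤ a) :
    ∃ x ∈ Ioo (-1 - 1 / a) (-1 - 1 / (2 * a)), simplestCubic a x = 0 := by
  have ha₀ : 0 < a := by linarith
  have hle : -1 - 1 / a ≤ -1 - 1 / (2 * a) := by gcongr; linarith
  exact intermediate_value_Ioo hle (continuous_simplestCubic a).continuousOn
    ⟨simplestCubic_neg_one_sub_one_div_neg ha₀, simplestCubic_neg_one_sub_one_div_two_mul_pos ha⟩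

theorem exists_simplestCubic_eq_zero_mem_Ioo_zero (ha : 0 < a) :
    ∃ x ∈ Ioo (-(1 / (a + 2))) (-(1 / (a + 3))), simplestCubic a x = 0 := by
  have hle : -(1 / (a + 2)) ≤ -(1 / (a + 3)) := by gcongr; linarith
  exact intermediate_value_Ioo' hle (continuous_simplestCubic a).continuousOn
    ⟨simplestCubic_neg_one_div_add_three_neg ha, simplestCubic_neg_one_div_add_two_pos ha⟩

end SimplestCubic

theorem eq_or_eq_or_eq_of_cubic_eq_zero {R : Type*} [CommRing R] [IsDomain R]
    {b c d x₁ x₂ x₃ y : R} (h₁₂ : x₁ ≠ x₂) (h₁₃ : x₁ ≠ x₃) (h₂₃ : x₂ ≠ x₃)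
    (hx₁ : x₁ ^ 3 + b * x₁ ^ 2 + c * x₁ + d = 0) (hx₂ : x₂ ^ 3 + b * x₂ ^ 2 + c * x₂ + d = 0)
    (hx₃ : x₃ ^ 3 + b * x₃ ^ 2 + c * x₃ + d = 0) (hy : y ^ 3 + b * y ^ 2 + c * y + d = 0) :
    y = x₁ ∨ y = x₂ ∨ y = x₃ := by
  -- Lagrange interpolation at `x₁, x₂, x₃`, with the Vandermonde determinant cleared
  have key : (y - x₁) * (y - x₂) * (y - x₃) * ((x₁ - x₂) * (x₁ - x₃) * (x₂ - x₃)) = 0 := by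
    linear_combination (x₁ - x₂) * (x₁ - x₃) * (x₂ - x₃) * hy
      - (x₂ - x₃) * (y - x₂) * (y - x₃) * hx₁ + (x₁ - x₃) * (y - x₁) * (y - x₃) * hx₂
      - (x₁ - x₂) * (y - x₁) * (y - x₂) * hx₃
  simpa [sub_eq_zero, h₁₂, h₁₃, h₂₃, or_assoc] using key

theorem eq_or_eq_or_eq_of_simplestCubic_eq_zero {a x₁ x₂ x₃ y : ℝ}
    (h₁₂ : x₁ ≠ x₂) (h₁₃ : x₁ ≠ x₃) (h₂₃ : x₂ ≠ x₃) (hx₁ : simplestCubic a x₁ = 0)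
    (hx₂ : simplestCubic a x₂ = 0) (hx₃ : simplestCubic a x₃ = 0) (hy : simplestCubic a y = 0) :
    y = x₁ ∨ y = x₂ ∨ y = x₃ := by
  unfold simplestCubic at *
  exact eq_or_eq_or_eq_of_cubic_eq_zero (b := -a) (c := -(a + 3)) (d := -1) h₁₂ h₁₃ h₂₃
    (by linear_combination hx₁) (by linear_combination hx₂) (by linear_combination hx₃)
    (by linear_combination hy)

section SquareBounds

variable {a x : ℝ}

theorem sq_mem_Ioo_of_mem_Ioo_add_one (ha : 4 ≤ a) (hx : x ∈ Ioo (a + 1) (a + 1 + 2 / a)) :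
    a ^ 2 < x ^ 2 ∧ x ^ 2 < 2 * a ^ 2 := by
  obtain ⟨hlo, hhi⟩ := hx
  have : 2 / a ≤ 1 / 2 := by rw [div_le_iff₀ (by linarith)]; linarith
  constructor <;> nlinarith

theorem sq_mem_Ioo_of_mem_Ioo_neg_one (ha : 3 ≤ a)
    (hx : x ∈ Ioo (-1 - 1 / a) (-1 - 1 / (2 * a))) : 1 < x ^ 2 ∧ x ^ 2 < 2 := by
  obtain ⟨hlo, hhi⟩ := hx
  have : 1 / a ≤ 1 / 3 := by gcongr
  have : 0 < 1 / (2 * a) := by positivity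
  constructor <;> nlinarith

theorem sq_mem_Ioo_of_mem_Ioo_zero (ha : 8 ≤ a)
    (hx : x ∈ Ioo (-(1 / (a + 2))) (-(1 / (a + 3)))) :
    1 / (2 * a ^ 2) < x ^ 2 ∧ x ^ 2 < 1 / a ^ 2 := by
  obtain ⟨hlo, hhi⟩ := hx
  have : 0 < 1 / (a + 3) := by positivity
  constructor
  · calc 1 / (2 * a ^ 2) < 1 / (a + 3) ^ 2 := by gcongr; nlinarith
      _ = (1 / (a + 3)) ^ 2 := (one_div_pow _ _).symm
      _ < x ^ 2 := by nlinarith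
  · calc x ^ 2 < (1 / (a + 2)) ^ 2 := by nlinarith
      _ = 1 / (a + 2) ^ 2 := one_div_pow _ _
      _ < 1 / a ^ 2 := by gcongr; linarith

end SquareBounds

theorem stmt_4 :
    ∀ a : ℤ, 7 ≤ a →
      ∃ ρ ρ' ρ'' : ℝ,
        (ρ ^ 3 - (a : ℝ) * ρ ^ 2 - ((a : ℝ) + 3) * ρ - 1 = 0) ∧
        (ρ' ^ 3 - (a : ℝ) * ρ' ^ 2 - ((a : ℝ) + 3) * ρ' - 1 = 0) ∧
        (ρ'' ^ 3 - (a : ℝ) * ρ'' ^ 2 - ((a : ℝ) + 3) * ρ'' - 1 = 0) ∧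
        ρ' < ρ'' ∧ ρ'' < ρ ∧
        (∀ y : ℝ, y ^ 3 - (a : ℝ) * y ^ 2 - ((a : ℝ) + 3) * y - 1 = 0 →
          y = ρ ∨ y = ρ' ∨ y = ρ'') ∧
        (a : ℝ) + 1 < ρ ∧ ρ < (a : ℝ) + 1 + 2 / a ∧
        -1 - 1 / (a : ℝ) < ρ' ∧ ρ' < -1 - 1 / (2 * (a : ℝ)) ∧
        -(1 / ((a : ℝ) + 2)) < ρ'' ∧ ρ'' < -(1 / ((a : ℝ) + 3)) ∧
        (8 ≤ a →
          (a : ℝ) ^ 2 < ρ ^ 2 ∧ ρ ^ 2 < 2 * (a : ℝ) ^ 2 ∧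
          1 < ρ' ^ 2 ∧ ρ' ^ 2 < 2 ∧
          1 / (2 * (a : ℝ) ^ 2) < ρ'' ^ 2 ∧ ρ'' ^ 2 < 1 / (a : ℝ) ^ 2) := by
  intro a ha
  have ha₇ : (7 : ℝ) ≤ a := by exact_mod_cast ha
  obtain ⟨ρ, hρ, hfρ⟩ := exists_simplestCubic_eq_zero_mem_Ioo_add_one (a := a) (by linarith)
  obtain ⟨ρ', hρ', hfρ'⟩ := exists_simplestCubic_eq_zero_mem_Ioo_neg_one (a := a) (by linarith)
  obtain ⟨ρ'', hρ'', hfρ''⟩ := exists_simplestCubic_eq_zero_mem_Ioo_zero (a := a) (by linarith)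
  have hρ'ρ'' : ρ' < ρ'' := by
    have : 0 < 1 / (2 * (a : ℝ)) := by positivity
    have : 1 / ((a : ℝ) + 2) < 1 := by rw [div_lt_one (by linarith)]; linarith
    linarith [hρ'.2, hρ''.1]
  have hρ''ρ : ρ'' < ρ := by
    have : 0 < 1 / ((a : ℝ) + 3) := by positivity
    linarith [hρ''.2, hρ.1]
  refine ⟨ρ, ρ', ρ'', hfρ, hfρ', hfρ'', hρ'ρ'', hρ''ρ, fun y hy => ?_,
    hρ.1, hρ.2, hρ'.1, hρ'.2, hρ''.1, hρ''.2, fun ha₈ => ?_⟩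
  · exact eq_or_eq_or_eq_of_simplestCubic_eq_zero (hρ'ρ''.trans hρ''ρ).ne' hρ''ρ.ne' hρ'ρ''.ne
      hfρ hfρ' hfρ'' hy
  · have ha₈ : (8 : ℝ) ≤ a := by exact_mod_cast ha₈
    obtain ⟨h₁, h₂⟩ := sq_mem_Ioo_of_mem_Ioo_add_one (by linarith) hρ
    obtain ⟨h₃, h₄⟩ := sq_mem_Ioo_of_mem_Ioo_neg_one (by linarith) hρ'
    obtain ⟨h₅, h₆⟩ := sq_mem_Ioo_of_mem_Ioo_zero ha₈ hρ''
    exact ⟨h₁, h₂, h₃, h₄, h₅, h₆⟩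
end

section
/- Let a ≥ 8 be an integer, let x > 0 be real, and let t₁, t₂, t₃ > 0 be real numbers. Set N(t₁, t₂, t₃) := (t₁ + t₂·ρ² + t₃·(ρ')⁻²)·(t₁ + t₂·(ρ')² + t₃·(ρ'')⁻²)·(t₁ + t₂·(ρ'')² + t₃·ρ⁻²). If N(t₁, t₂, t₃) ≤ x, then t₁³ < x, t₂³ < x, a²·t₁·t₂² < x, a²·t₁²·t₃ < x, a²·t₂·t₃² < 2x, and a⁴·t₁·t₂·t₃ < x. -/
/-! The three roots are separated by the intermediate value theorem: `a + 1 < ρ`, `ρ' < -1` and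
`-1/a < ρ'' < 0`, so `ρ² > a²`, `ρ'² > 1`, `ρ''⁻² > a²`, while `ρ ρ' ρ'' = 1` by Vieta.
Each of the six monomials is, up to one of these factors, the product of one summand taken from
each of the three factors of `N`, hence is smaller than `N ≤ x`. -/

theorem eq_and_eq_and_eq_of_mem_of_lt {α : Type*} [LinearOrder α] {x y z u v w : α}
    (hxy : x < y) (hyz : y < z) (huv : u < v) (hvw : v < w)
    (hu : u = x ∨ u = y ∨ u = z) (hv : v = x ∨ v = y ∨ v = z) (hw : w = x ∨ w = y ∨ w = z) :
    u = x ∧ v = y ∧ w = z := by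
  rcases hu with rfl | rfl | rfl <;> rcases hv with rfl | rfl | rfl <;>
    rcases hw with rfl | rfl | rfl <;> first | exact ⟨rfl, rfl, rfl⟩ | (exfalso; order)

theorem mul_mul_eq_neg_of_cubic_roots {K : Type*} [Field K] {b c d x y z : K}
    (hx : x ^ 3 + b * x ^ 2 + c * x + d = 0) (hy : y ^ 3 + b * y ^ 2 + c * y + d = 0)
    (hz : z ^ 3 + b * z ^ 2 + c * z + d = 0) (hxy : x ≠ y) (hxz : x ≠ z) (hyz : y ≠ z) :
    x * y * z = -d := by
  have hxy' : x ^ 2 + x * y + y ^ 2 + b * (x + y) + c = 0 :=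
    (mul_eq_zero.mp (by linear_combination hx - hy)).resolve_left (sub_ne_zero.mpr hxy)
  have hxz' : x ^ 2 + x * z + z ^ 2 + b * (x + z) + c = 0 :=
    (mul_eq_zero.mp (by linear_combination hx - hz)).resolve_left (sub_ne_zero.mpr hxz)
  have hsum : x + y + z + b = 0 :=
    (mul_eq_zero.mp (by linear_combination hxy' - hxz')).resolve_left (sub_ne_zero.mpr hyz)
  linear_combination x * y * hsum - y * hxy' + hy

theorem mul_mul_lt_mul_mul {p q r A B C : ℝ} (hp : 0 ≤ p) (hq : 0 ≤ q) (hr : 0 ≤ r)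
    (hpA : p < A) (hqB : q < B) (hrC : r < C) : p * q * r < A * B * C :=
  mul_lt_mul'' (mul_lt_mul'' hpA hqB hp hq) hrC (mul_nonneg hp hq) hr

theorem monomial_bounds_of_norm_le {a x t₁ t₂ t₃ α β γ : ℝ}
    (ht₁ : 0 < t₁) (ht₂ : 0 < t₂) (ht₃ : 0 < t₃) (hα : 0 < α) (hβ : 0 < β) (hγ : 0 < γ)
    (hαβγ : α * β * γ = 1) (haα : a ^ 2 < α) (hβ₁ : 1 < β) (haγ : a ^ 2 < γ⁻¹)
    (hN : (t₁ + t₂ * α + t₃ * β⁻¹) * (t₁ + t₂ * β + t₃ * γ⁻¹) * (t₁ + t₂ * γ + t₃ * α⁻¹) ≤ x) :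
    t₁ ^ 3 < x ∧ t₂ ^ 3 < x ∧ a ^ 2 * t₁ * t₂ ^ 2 < x ∧ a ^ 2 * t₁ ^ 2 * t₃ < x ∧
      a ^ 2 * t₂ * t₃ ^ 2 < 2 * x ∧ a ^ 4 * t₁ * t₂ * t₃ < x := by
  set A := t₁ + t₂ * α + t₃ * β⁻¹
  set B := t₁ + t₂ * β + t₃ * γ⁻¹
  set C := t₁ + t₂ * γ + t₃ * α⁻¹
  have pick {p q r : ℝ} (hp : 0 ≤ p) (hq : 0 ≤ q) (hr : 0 ≤ r) (hpA : p < A) (hqB : q < B)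
      (hrC : r < C) : p * q * r < x := (mul_mul_lt_mul_mul hp hq hr hpA hqB hrC).trans_le hN
  have : 0 < t₂ * α := by positivity
  have : 0 < t₂ * β := by positivity
  have : 0 < t₂ * γ := by positivity
  have : 0 < t₃ * α⁻¹ := by positivity
  have : 0 < t₃ * β⁻¹ := by positivity
  have : 0 < t₃ * γ⁻¹ := by positivity
  have hcube : t₁ ^ 3 < x := by
    rw [pow_three']
    exact pick ht₁.le ht₁.le ht₁.le (by linarith) (by linarith) (by linarith)
  have haαβ : a ^ 2 < α * β := by nlinarith
  have haαγ : a ^ 4 < α * γ⁻¹ := by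
    rw [show a ^ 4 = a ^ 2 * a ^ 2 by ring]
    exact mul_lt_mul'' haα haγ (sq_nonneg a) (sq_nonneg a)
  refine ⟨hcube, ?_, ?_, ?_, ?_, ?_⟩
  · calc t₂ ^ 3 = t₂ * α * (t₂ * β) * (t₂ * γ) := by linear_combination -t₂ ^ 3 * hαβγ
      _ < x := pick (by positivity) (by positivity) (by positivity)
          (by linarith) (by linarith) (by linarith)
  · calc a ^ 2 * t₁ * t₂ ^ 2 < α * β * t₁ * t₂ ^ 2 := by gcongr
      _ = t₂ * α * (t₂ * β) * t₁ := by ring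
      _ < x := pick (by positivity) (by positivity) ht₁.le
          (by linarith) (by linarith) (by linarith)
  · calc a ^ 2 * t₁ ^ 2 * t₃ < γ⁻¹ * t₁ ^ 2 * t₃ := by gcongr
      _ = t₁ * (t₃ * γ⁻¹) * t₁ := by ring
      _ < x := pick ht₁.le (by positivity) ht₁.le (by linarith) (by linarith) (by linarith)
  · calc a ^ 2 * t₂ * t₃ ^ 2 < γ⁻¹ * t₂ * t₃ ^ 2 := by gcongr
      _ = t₂ * α * (t₃ * γ⁻¹) * (t₃ * α⁻¹) := by field_simp
      _ < x := pick (by positivity) (by positivity) (by positivity)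
          (by linarith) (by linarith) (by linarith)
      _ ≤ 2 * x := by linarith [pow_pos ht₁ 3]
  · calc a ^ 4 * t₁ * t₂ * t₃ < α * γ⁻¹ * t₁ * t₂ * t₃ := by gcongr
      _ = t₂ * α * (t₃ * γ⁻¹) * t₁ := by ring
      _ < x := pick (by positivity) (by positivity) ht₁.le
          (by linarith) (by linarith) (by linarith)

/-- The polynomial `f_a` (Shanks' simplest cubic), as a function of `y`. -/
def shanksCubic (a y : ℝ) : ℝ := y ^ 3 - a * y ^ 2 - (a + 3) * y - 1

section ShanksCubic

variable {a : ℝ}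

theorem exists_shanksCubic_root_mem_Ioo {u v : ℝ} (huv : u ≤ v)
    (hsign : shanksCubic a u < 0 ∧ 0 < shanksCubic a v ∨
      0 < shanksCubic a u ∧ shanksCubic a v < 0) :
    ∃ r ∈ Set.Ioo u v, shanksCubic a r = 0 := by
  have hcont : ContinuousOn (shanksCubic a) (Set.Icc u v) := by
    unfold shanksCubic; fun_prop
  rcases hsign with h | h
  · exact intermediate_value_Ioo huv hcont h
  · exact intermediate_value_Ioo' huv hcont ⟨h.2, h.1⟩

theorem shanksCubic_roots_mem (ha : 1 ≤ a) {ρ ρ' ρ'' : ℝ}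
    (hall : ∀ y, shanksCubic a y = 0 → y = ρ ∨ y = ρ' ∨ y = ρ'')
    (hord₁ : ρ' < ρ'') (hord₂ : ρ'' < ρ) :
    ρ' < -1 ∧ -a⁻¹ < ρ'' ∧ ρ'' < 0 ∧ a + 1 < ρ := by
  have ha₀ : 0 < a := by linarith
  have ha_inv : a⁻¹ ≤ 1 := inv_le_one_of_one_le₀ ha
  have hsign₁ : shanksCubic a (-2) < 0 ∧ 0 < shanksCubic a (-1) := by
    unfold shanksCubic; constructor <;> nlinarith
  have hsign₂ : 0 < shanksCubic a (-a⁻¹) ∧ shanksCubic a 0 < 0 := by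
    have : shanksCubic a (-a⁻¹) = (2 * a ^ 2 - 1) / a ^ 3 := by
      unfold shanksCubic; field_simp; ring
    rw [this]
    exact ⟨div_pos (by nlinarith) (by positivity), by norm_num [shanksCubic]⟩
  have hsign₃ : shanksCubic a (a + 1) < 0 ∧ 0 < shanksCubic a (a + 2) := by
    unfold shanksCubic; constructor <;> nlinarith
  obtain ⟨r₁, ⟨-, hr₁⟩, hroot₁⟩ :=
    exists_shanksCubic_root_mem_Ioo (by norm_num : (-2 : ℝ) ≤ -1) (.inl hsign₁)
  obtain ⟨r₂, ⟨hr₂, hr₂'⟩, hroot₂⟩ :=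
    exists_shanksCubic_root_mem_Ioo (neg_nonpos.mpr (inv_pos.mpr ha₀).le) (.inr hsign₂)
  obtain ⟨r₃, ⟨hr₃, -⟩, hroot₃⟩ :=
    exists_shanksCubic_root_mem_Ioo (by linarith : a + 1 ≤ a + 2) (.inl hsign₃)
  obtain ⟨rfl, rfl, rfl⟩ := eq_and_eq_and_eq_of_mem_of_lt hord₁ hord₂
    (by linarith : r₁ < r₂) (by linarith : r₂ < r₃)
    (hall r₁ hroot₁).rotate (hall r₂ hroot₂).rotate (hall r₃ hroot₃).rotate
  exact ⟨hr₁, hr₂, hr₂', hr₃⟩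

theorem shanksCubic_roots_prod {ρ ρ' ρ'' : ℝ} (hρ : shanksCubic a ρ = 0)
    (hρ' : shanksCubic a ρ' = 0) (hρ'' : shanksCubic a ρ'' = 0)
    (hord₁ : ρ' < ρ'') (hord₂ : ρ'' < ρ) : ρ * ρ' * ρ'' = 1 := by
  unfold shanksCubic at hρ hρ' hρ''
  have := mul_mul_eq_neg_of_cubic_roots (b := -a) (c := -(a + 3)) (d := -1)
    (by linear_combination hρ) (by linear_combination hρ') (by linear_combination hρ'')
    (hord₁.trans hord₂).ne' hord₂.ne' hord₁.ne
  linear_combination this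

end ShanksCubic

theorem stmt_9_general (a : ℤ) (ha : 8 ≤ a) (x : ℝ)
    (ρ ρ' ρ'' : ℝ)
    (hρ : ρ ^ 3 - (a : ℝ) * ρ ^ 2 - ((a : ℝ) + 3) * ρ - 1 = 0)
    (hρ' : ρ' ^ 3 - (a : ℝ) * ρ' ^ 2 - ((a : ℝ) + 3) * ρ' - 1 = 0)
    (hρ'' : ρ'' ^ 3 - (a : ℝ) * ρ'' ^ 2 - ((a : ℝ) + 3) * ρ'' - 1 = 0)
    (hord₁ : ρ' < ρ'') (hord₂ : ρ'' < ρ)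
    (hall : ∀ y : ℝ, y ^ 3 - (a : ℝ) * y ^ 2 - ((a : ℝ) + 3) * y - 1 = 0 →
      y = ρ ∨ y = ρ' ∨ y = ρ'')
    (t₁ t₂ t₃ : ℝ) (ht₁ : 0 < t₁) (ht₂ : 0 < t₂) (ht₃ : 0 < t₃)
    (hN : (t₁ + t₂ * ρ ^ 2 + t₃ * (ρ')⁻¹ ^ 2) * (t₁ + t₂ * ρ' ^ 2 + t₃ * (ρ'')⁻¹ ^ 2)
        * (t₁ + t₂ * ρ'' ^ 2 + t₃ * ρ⁻¹ ^ 2) ≤ x) :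
    t₁ ^ 3 < x ∧ t₂ ^ 3 < x ∧ (a : ℝ) ^ 2 * t₁ * t₂ ^ 2 < x ∧
      (a : ℝ) ^ 2 * t₁ ^ 2 * t₃ < x ∧ (a : ℝ) ^ 2 * t₂ * t₃ ^ 2 < 2 * x ∧
      (a : ℝ) ^ 4 * t₁ * t₂ * t₃ < x := by
  have ha₁ : (1 : ℝ) ≤ a := by exact_mod_cast (by omega : (1 : ℤ) ≤ a)
  obtain ⟨hρ'_lt, hρ''_gt, hρ''_neg, hρ_gt⟩ := shanksCubic_roots_mem ha₁ hall hord₁ hord₂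
  have hprod := shanksCubic_roots_prod hρ hρ' hρ'' hord₁ hord₂
  have hρ''_inv : ρ''⁻¹ < -a :=
    (inv_lt_of_neg hρ''_neg (by linarith)).mpr (neg_inv (a := (a : ℝ)) ▸ hρ''_gt)
  simp only [inv_pow] at hN
  exact monomial_bounds_of_norm_le ht₁ ht₂ ht₃ (by nlinarith) (by nlinarith) (by nlinarith)
    (by linear_combination (ρ * ρ' * ρ'' + 1) * hprod) (by nlinarith) (by nlinarith)
    (by rw [← inv_pow]; nlinarith) hN

theorem stmt_9 (a : ℤ) (ha : 8 ≤ a) (x : ℝ) (hx : 0 < x)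
    (ρ ρ' ρ'' : ℝ)
    (hρ : ρ ^ 3 - (a : ℝ) * ρ ^ 2 - ((a : ℝ) + 3) * ρ - 1 = 0)
    (hρ' : ρ' ^ 3 - (a : ℝ) * ρ' ^ 2 - ((a : ℝ) + 3) * ρ' - 1 = 0)
    (hρ'' : ρ'' ^ 3 - (a : ℝ) * ρ'' ^ 2 - ((a : ℝ) + 3) * ρ'' - 1 = 0)
    (hord₁ : ρ' < ρ'') (hord₂ : ρ'' < ρ)
    (hall : ∀ y : ℝ, y ^ 3 - (a : ℝ) * y ^ 2 - ((a : ℝ) + 3) * y - 1 = 0 →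
      y = ρ ∨ y = ρ' ∨ y = ρ'')
    (t₁ t₂ t₃ : ℝ) (ht₁ : 0 < t₁) (ht₂ : 0 < t₂) (ht₃ : 0 < t₃)
    (hN : (t₁ + t₂ * ρ ^ 2 + t₃ * (ρ')⁻¹ ^ 2) * (t₁ + t₂ * ρ' ^ 2 + t₃ * (ρ'')⁻¹ ^ 2)
        * (t₁ + t₂ * ρ'' ^ 2 + t₃ * ρ⁻¹ ^ 2) ≤ x) :
    t₁ ^ 3 < x ∧ t₂ ^ 3 < x ∧ (a : ℝ) ^ 2 * t₁ * t₂ ^ 2 < x ∧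
      (a : ℝ) ^ 2 * t₁ ^ 2 * t₃ < x ∧ (a : ℝ) ^ 2 * t₂ * t₃ ^ 2 < 2 * x ∧
      (a : ℝ) ^ 4 * t₁ * t₂ * t₃ < x :=
  stmt_9_general a ha x ρ ρ' ρ'' hρ hρ' hρ'' hord₁ hord₂ hall t₁ t₂ t₃ ht₁ ht₂ ht₃ hN
end

section
/- Let a ≥ 8 be an integer and let t₁, t₂, t₃ > 0 be real numbers. Set N(t₁, t₂, t₃) := (t₁ + t₂·ρ² + t₃·(ρ')⁻²)·(t₁ + t₂·(ρ')² + t₃·(ρ'')⁻²)·(t₁ + t₂·(ρ'')² + t₃·ρ⁻²). Then N(t₁, t₂, t₃) < (t₁ + 2a²·t₂ + t₃)·(t₁ + 2t₂ + 2a²·t₃)·(t₁ + t₂/a² + t₃/a²). -/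
/-!
The roots of `f_a` are located by sign changes: `f_a(-7/5) < 0 < f_a(-1)`,
`f_a(-1/a) > 0 > f_a(-5/(7a))` and `f_a(a+1) < 0 < f_a(a+2)`. These three intervals are disjoint
and ordered, so they contain `ρ'`, `ρ''`, `ρ` respectively. This gives `ρ² < 2a²`, `ρ'² < 2`,
`ρ''² < 1/a²` and `ρ⁻² < 1/a²`, `ρ'⁻² < 1`, `ρ''⁻² < (7a/5)² < 2a²`, so each factor of `N` is
smaller than the corresponding factor on the right.
-/

open Set

theorem cubic_eq_mul_sub_of_roots {K : Type*} [Field K] {b c d x₁ x₂ x₃ : K}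
    (h₁₂ : x₁ ≠ x₂) (h₁₃ : x₁ ≠ x₃) (h₂₃ : x₂ ≠ x₃)
    (h₁ : x₁ ^ 3 + b * x₁ ^ 2 + c * x₁ + d = 0) (h₂ : x₂ ^ 3 + b * x₂ ^ 2 + c * x₂ + d = 0)
    (h₃ : x₃ ^ 3 + b * x₃ ^ 2 + c * x₃ + d = 0) (x : K) :
    x ^ 3 + b * x ^ 2 + c * x + d = (x - x₁) * (x - x₂) * (x - x₃) := by
  have e₁₂ : x₁ ^ 2 + x₁ * x₂ + x₂ ^ 2 + b * (x₁ + x₂) + c = 0 :=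
    mul_left_cancel₀ (sub_ne_zero.mpr h₁₂) (by linear_combination h₁ - h₂)
  have e₁₃ : x₁ ^ 2 + x₁ * x₃ + x₃ ^ 2 + b * (x₁ + x₃) + c = 0 :=
    mul_left_cancel₀ (sub_ne_zero.mpr h₁₃) (by linear_combination h₁ - h₃)
  have sum : x₁ + x₂ + x₃ = -b :=
    mul_left_cancel₀ (sub_ne_zero.mpr h₂₃) (by linear_combination e₁₂ - e₁₃)
  have pairs : x₁ * x₂ + x₁ * x₃ + x₂ * x₃ = c := by linear_combination (x₁ + x₂) * sum - e₁₂
  have prod : x₁ * x₂ * x₃ = -d := by linear_combination h₁ - x₁ ^ 2 * sum + x₁ * pairs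
  linear_combination x ^ 2 * sum - x * pairs + prod

theorem mul_sub_mul_sub_nonneg_of_notMem_Ioo {x y r : ℝ} (hxy : x ≤ y) (hr : r ∉ Ioo x y) :
    0 ≤ (x - r) * (y - r) := by
  rw [mem_Ioo, not_and_or, not_lt, not_lt] at hr
  rcases hr with hr | hr
  · exact mul_nonneg (by linarith) (by linarith)
  · exact mul_nonneg_of_nonpos_of_nonpos (by linarith) (by linarith)

theorem mem_Ioo_of_sign_change {x y r₁ r₂ r₃ : ℝ} (hxy : x ≤ y)
    (h : (x - r₁) * (x - r₂) * (x - r₃) * ((y - r₁) * (y - r₂) * (y - r₃)) < 0) :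
    r₁ ∈ Ioo x y ∨ r₂ ∈ Ioo x y ∨ r₃ ∈ Ioo x y := by
  by_contra! hr
  obtain ⟨h₁, h₂, h₃⟩ := hr
  have : 0 ≤ (x - r₁) * (y - r₁) * ((x - r₂) * (y - r₂)) * ((x - r₃) * (y - r₃)) :=
    mul_nonneg (mul_nonneg (mul_sub_mul_sub_nonneg_of_notMem_Ioo hxy h₁)
      (mul_sub_mul_sub_nonneg_of_notMem_Ioo hxy h₂)) (mul_sub_mul_sub_nonneg_of_notMem_Ioo hxy h₃)
  linarith

theorem mem_Ioo_of_three_disjoint_Ioo {r₁ r₂ r₃ x₁ y₁ x₂ y₂ x₃ y₃ : ℝ}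
    (h₁₂ : r₁ < r₂) (h₂₃ : r₂ < r₃) (hy₁ : y₁ ≤ x₂) (hy₂ : y₂ ≤ x₃)
    (h₁ : r₁ ∈ Ioo x₁ y₁ ∨ r₂ ∈ Ioo x₁ y₁ ∨ r₃ ∈ Ioo x₁ y₁)
    (h₂ : r₁ ∈ Ioo x₂ y₂ ∨ r₂ ∈ Ioo x₂ y₂ ∨ r₃ ∈ Ioo x₂ y₂)
    (h₃ : r₁ ∈ Ioo x₃ y₃ ∨ r₂ ∈ Ioo x₃ y₃ ∨ r₃ ∈ Ioo x₃ y₃) :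
    r₁ ∈ Ioo x₁ y₁ ∧ r₂ ∈ Ioo x₂ y₂ ∧ r₃ ∈ Ioo x₃ y₃ := by
  refine ⟨⟨?_, ?_⟩, ⟨?_, ?_⟩, ⟨?_, ?_⟩⟩ <;>
  rcases h₁ with ⟨_, _⟩ | ⟨_, _⟩ | ⟨_, _⟩ <;>
  rcases h₂ with ⟨_, _⟩ | ⟨_, _⟩ | ⟨_, _⟩ <;>
  rcases h₃ with ⟨_, _⟩ | ⟨_, _⟩ | ⟨_, _⟩ <;>
  linarith

section simplestCubic

variable {a : ℝ}

theorem simplestCubic_neg_seven_fifths_neg (ha : 1 ≤ a) : simplestCubic a (-7 / 5) < 0 := by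
  unfold simplestCubic
  linarith

theorem simplestCubic_neg_one : simplestCubic a (-1) = 1 := by
  unfold simplestCubic
  ring

theorem simplestCubic_neg_inv_pos (ha : 1 ≤ a) : 0 < simplestCubic a (-a⁻¹) := by
  have key : simplestCubic a (-a⁻¹) = (2 * a ^ 2 - 1) / a ^ 3 := by
    unfold simplestCubic
    field_simp
    ring
  rw [key]
  exact div_pos (by nlinarith) (by positivity)

theorem simplestCubic_neg_five_div_seven_mul_neg (ha : 6 ≤ a) :
    simplestCubic a (-5 / (7 * a)) < 0 := by
  have key :
      simplestCubic a (-5 / (7 * a)) = (-98 * a ^ 3 + 560 * a ^ 2 - 125) / (343 * a ^ 3) := by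
    unfold simplestCubic
    field_simp
    ring
  rw [key]
  exact div_neg_of_neg_of_pos (by nlinarith) (by positivity)

theorem simplestCubic_add_one : simplestCubic a (a + 1) = -2 * a - 3 := by
  unfold simplestCubic
  ring

theorem simplestCubic_add_two : simplestCubic a (a + 2) = a ^ 2 + 3 * a + 1 := by
  unfold simplestCubic
  ring

theorem simplestCubic_roots_mem_Ioo (ha : 6 ≤ a) {ρ ρ' ρ'' : ℝ}
    (hρ : simplestCubic a ρ = 0) (hρ' : simplestCubic a ρ' = 0) (hρ'' : simplestCubic a ρ'' = 0)
    (hρ'ρ'' : ρ' < ρ'') (hρ''ρ : ρ'' < ρ) :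
    ρ' ∈ Ioo (-7 / 5) (-1) ∧ ρ'' ∈ Ioo (-a⁻¹) (-5 / (7 * a)) ∧ ρ ∈ Ioo (a + 1) (a + 2) := by
  have root {r : ℝ} (hr : simplestCubic a r = 0) : r ^ 3 + -a * r ^ 2 + -(a + 3) * r + -1 = 0 := by
    rw [← hr, simplestCubic]
    ring
  have factor (x : ℝ) : simplestCubic a x = (x - ρ') * (x - ρ'') * (x - ρ) := by
    rw [simplestCubic, ← cubic_eq_mul_sub_of_roots hρ'ρ''.ne (hρ'ρ''.trans hρ''ρ).ne hρ''ρ.ne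
      (root hρ') (root hρ'') (root hρ) x]
    ring
  have sign_change {x y : ℝ} (hxy : x ≤ y) (h : simplestCubic a x * simplestCubic a y < 0) :=
    mem_Ioo_of_sign_change (r₁ := ρ') (r₂ := ρ'') (r₃ := ρ) hxy (by rwa [factor, factor] at h)
  have ha₀ : 0 < a⁻¹ := inv_pos.mpr (by linarith)
  have hmid : -5 / (7 * a) = 5 / 7 * -a⁻¹ := by ring
  exact mem_Ioo_of_three_disjoint_Ioo hρ'ρ'' hρ''ρ
    (neg_le_neg (inv_le_one_of_one_le₀ (by linarith))) (by rw [hmid]; linarith)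
    (sign_change (by norm_num) (mul_neg_of_neg_of_pos (simplestCubic_neg_seven_fifths_neg
      (by linarith)) (by rw [simplestCubic_neg_one]; norm_num)))
    (sign_change (by rw [hmid]; linarith) (mul_neg_of_pos_of_neg
      (simplestCubic_neg_inv_pos (by linarith)) (simplestCubic_neg_five_div_seven_mul_neg ha)))
    (sign_change (by linarith) (mul_neg_of_neg_of_pos (by rw [simplestCubic_add_one]; linarith)
      (by rw [simplestCubic_add_two]; positivity)))

theorem simplestCubic_root_sq_bounds (ha : 6 ≤ a) {ρ ρ' ρ'' : ℝ}
    (hρ : simplestCubic a ρ = 0) (hρ' : simplestCubic a ρ' = 0) (hρ'' : simplestCubic a ρ'' = 0)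
    (hρ'ρ'' : ρ' < ρ'') (hρ''ρ : ρ'' < ρ) :
    (ρ ^ 2 < 2 * a ^ 2 ∧ ρ⁻¹ ^ 2 < (a ^ 2)⁻¹) ∧ (ρ' ^ 2 < 2 ∧ ρ'⁻¹ ^ 2 < 1) ∧
      (ρ'' ^ 2 < (a ^ 2)⁻¹ ∧ ρ''⁻¹ ^ 2 < 2 * a ^ 2) := by
  obtain ⟨⟨hρ'₁, hρ'₂⟩, ⟨hρ''₁, hρ''₂⟩, ⟨hρ₁, hρ₂⟩⟩ :=
    simplestCubic_roots_mem_Ioo ha hρ hρ' hρ'' hρ'ρ'' hρ''ρ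
  have ha₀ : 0 < a := by linarith
  have hb : -5 / (7 * a) < 0 := div_neg_of_neg_of_pos (by norm_num) (by positivity)
  have hρ''₀ : ρ'' < 0 := hρ''₂.trans hb
  refine ⟨⟨?_, ?_⟩, ⟨?_, ?_⟩, ⟨?_, ?_⟩⟩
  · nlinarith
  · rw [inv_pow]
    exact inv_strictAnti₀ (by positivity) (pow_lt_pow_left₀ (by linarith) ha₀.le two_ne_zero)
  · nlinarith
  · rw [inv_pow]
    exact inv_lt_one_of_one_lt₀ (by nlinarith)
  · rw [← inv_pow]
    exact sq_lt_sq' hρ''₁ (hρ''₀.trans (inv_pos.mpr ha₀))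
  · have h : -(7 * a / 5) < ρ''⁻¹ := by
      rw [show -(7 * a / 5) = (-5 / (7 * a))⁻¹ by field_simp]
      exact (inv_lt_inv_of_neg hb hρ''₀).mpr hρ''₂
    nlinarith [sq_lt_sq' h ((inv_lt_zero'.mpr hρ''₀).trans (by positivity))]

end simplestCubic

theorem stmt_10_general (a : ℤ) (ha : 8 ≤ a)
    (ρ ρ' ρ'' : ℝ)
    (hρ : ρ ^ 3 - (a : ℝ) * ρ ^ 2 - ((a : ℝ) + 3) * ρ - 1 = 0)
    (hρ' : ρ' ^ 3 - (a : ℝ) * ρ' ^ 2 - ((a : ℝ) + 3) * ρ' - 1 = 0)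
    (hρ'' : ρ'' ^ 3 - (a : ℝ) * ρ'' ^ 2 - ((a : ℝ) + 3) * ρ'' - 1 = 0)
    (hord₁ : ρ' < ρ'') (hord₂ : ρ'' < ρ)
    (t₁ t₂ t₃ : ℝ) (ht₁ : 0 < t₁) (ht₂ : 0 < t₂) (ht₃ : 0 < t₃) :
    (t₁ + t₂ * ρ ^ 2 + t₃ * (ρ')⁻¹ ^ 2) * (t₁ + t₂ * ρ' ^ 2 + t₃ * (ρ'')⁻¹ ^ 2)
        * (t₁ + t₂ * ρ'' ^ 2 + t₃ * ρ⁻¹ ^ 2) <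
      (t₁ + 2 * (a : ℝ) ^ 2 * t₂ + t₃) * (t₁ + 2 * t₂ + 2 * (a : ℝ) ^ 2 * t₃)
        * (t₁ + t₂ / (a : ℝ) ^ 2 + t₃ / (a : ℝ) ^ 2) := by
  obtain ⟨⟨hρ₁, hρ₂⟩, ⟨hρ'₁, hρ'₂⟩, ⟨hρ''₁, hρ''₂⟩⟩ :=
    simplestCubic_root_sq_bounds (by exact_mod_cast ha.trans' (by norm_num)) hρ hρ' hρ'' hord₁ hord₂
  have F₁ : t₁ + t₂ * ρ ^ 2 + t₃ * (ρ')⁻¹ ^ 2 < t₁ + t₂ * (2 * (a : ℝ) ^ 2) + t₃ * 1 := by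
    gcongr
  have F₂ : t₁ + t₂ * ρ' ^ 2 + t₃ * (ρ'')⁻¹ ^ 2 < t₁ + t₂ * 2 + t₃ * (2 * (a : ℝ) ^ 2) := by
    gcongr
  have F₃ :
      t₁ + t₂ * ρ'' ^ 2 + t₃ * ρ⁻¹ ^ 2 < t₁ + t₂ * ((a : ℝ) ^ 2)⁻¹ + t₃ * ((a : ℝ) ^ 2)⁻¹ := by
    gcongr
  exact (mul_lt_mul'' (mul_lt_mul'' F₁ F₂ (by positivity) (by positivity)) F₃
    (by positivity) (by positivity)).trans_eq (by ring)

theorem stmt_10 (a : ℤ) (ha : 8 ≤ a)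
    (ρ ρ' ρ'' : ℝ)
    (hρ : ρ ^ 3 - (a : ℝ) * ρ ^ 2 - ((a : ℝ) + 3) * ρ - 1 = 0)
    (hρ' : ρ' ^ 3 - (a : ℝ) * ρ' ^ 2 - ((a : ℝ) + 3) * ρ' - 1 = 0)
    (hρ'' : ρ'' ^ 3 - (a : ℝ) * ρ'' ^ 2 - ((a : ℝ) + 3) * ρ'' - 1 = 0)
    (hord₁ : ρ' < ρ'') (hord₂ : ρ'' < ρ)
    (hall : ∀ y : ℝ, y ^ 3 - (a : ℝ) * y ^ 2 - ((a : ℝ) + 3) * y - 1 = 0 →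
      y = ρ ∨ y = ρ' ∨ y = ρ'')
    (t₁ t₂ t₃ : ℝ) (ht₁ : 0 < t₁) (ht₂ : 0 < t₂) (ht₃ : 0 < t₃) :
    (t₁ + t₂ * ρ ^ 2 + t₃ * (ρ')⁻¹ ^ 2) * (t₁ + t₂ * ρ' ^ 2 + t₃ * (ρ'')⁻¹ ^ 2)
        * (t₁ + t₂ * ρ'' ^ 2 + t₃ * ρ⁻¹ ^ 2) <
      (t₁ + 2 * (a : ℝ) ^ 2 * t₂ + t₃) * (t₁ + 2 * t₂ + 2 * (a : ℝ) ^ 2 * t₃)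
        * (t₁ + t₂ / (a : ℝ) ^ 2 + t₃ / (a : ℝ) ^ 2) :=
  stmt_10_general a ha ρ ρ' ρ'' hρ hρ' hρ'' hord₁ hord₂ t₁ t₂ t₃ ht₁ ht₂ ht₃
end

section
/- Let a ≥ 1 and w ≥ 1 be integers, and let w₀, w₁, w₂ ≥ 0 be integers with w = (a² + 3a + 3)·w₀ + (a+1)·w₁ + w₂, w₁ ≤ a + 2, w₂ ≤ a, and w₂ = 0 whenever w₁ = a + 2. Then ⌊−(a+1)·w/(a² + 3a + 3)⌋ = −(a+1)·w₀ − w₁ + δ, where δ = 1 if w₁ = a + 2, δ = 0 if w₁ ≤ a + 1 and w₁ ≥ w₂, and δ = −1 if w₁ ≤ a + 1 and w₁ < w₂. Moreover, −(a+1)·w/(a² + 3a + 3) − ⌊−(a+1)·w/(a² + 3a + 3)⌋ = ((a+2)·w₁ − (a+1)·w₂)/(a² + 3a + 3) − δ. -/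
/-! With `D = a² + 3a + 3` one has `(a + 1)² = D - (a + 2)`, so
`-(a + 1) w = (-(a + 1) w₀ - w₁) D + (a + 2) w₁ - (a + 1) w₂`.
The bounds on the digits put `(a + 2) w₁ - (a + 1) w₂ - δ D` in `[0, D)`, so this is
division with remainder by `D`, with quotient `-(a + 1) w₀ - w₁ + δ`. -/

lemma Int.floor_intCast_div_intCast_of_eq_mul_add {α : Type*} [Field α] [LinearOrder α]
    [IsStrictOrderedRing α] [FloorRing α] {n d q r : ℤ} (hd : 0 < d) (h : n = q * d + r)
    (hr₀ : 0 ≤ r) (hrd : r < d) : ⌊(n : α) / d⌋ = q := by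
  have hdα : (0 : α) < d := by exact_mod_cast hd
  rw [Int.floor_eq_iff, le_div_iff₀ hdα, div_lt_iff₀ hdα]
  constructor <;> norm_cast <;> rw [h] <;> nlinarith

/-- The correction `δ` of the floor formula. -/
def carry (a w₁ w₂ : ℤ) : ℤ := if w₁ = a + 2 then 1 else if w₂ ≤ w₁ then 0 else -1

section carry

variable {a w₁ w₂ : ℤ}

lemma carry_of_eq (h : w₁ = a + 2) : carry a w₁ w₂ = 1 := if_pos h

lemma carry_of_le (h₁ : w₁ ≤ a + 1) (h₂ : w₂ ≤ w₁) : carry a w₁ w₂ = 0 := by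
  rw [carry, if_neg (by omega), if_pos h₂]

lemma carry_of_lt (h₁ : w₁ ≤ a + 1) (h₂ : w₁ < w₂) : carry a w₁ w₂ = -1 := by
  rw [carry, if_neg (by omega), if_neg (by omega)]

lemma sub_carry_mul_mem_Ico (hw₁ : 0 ≤ w₁) (hw₂ : 0 ≤ w₂) (hw₁le : w₁ ≤ a + 2)
    (hw₂le : w₂ ≤ a) (hcase : w₁ = a + 2 → w₂ = 0) :
    (a + 2) * w₁ - (a + 1) * w₂ - carry a w₁ w₂ * (a ^ 2 + 3 * a + 3) ∈
      Set.Ico 0 (a ^ 2 + 3 * a + 3) := by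
  have ha : 0 ≤ a := hw₂.trans hw₂le
  by_cases h₁ : w₁ = a + 2
  · obtain rfl := hcase h₁
    rw [carry_of_eq h₁, h₁]
    constructor <;> nlinarith
  by_cases h₂ : w₂ ≤ w₁
  · rw [carry_of_le (by omega) h₂]
    constructor <;> nlinarith [mul_le_mul_of_nonneg_left (show w₁ ≤ a + 1 by omega)
      (show 0 ≤ a + 2 by omega)]
  · rw [carry_of_lt (by omega) (by omega)]
    constructor <;> nlinarith

end carry

theorem stmt_11_general (a w w₀ w₁ w₂ : ℤ)
    (hw₁ : 0 ≤ w₁) (hw₂ : 0 ≤ w₂)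
    (hdec : w = (a ^ 2 + 3 * a + 3) * w₀ + (a + 1) * w₁ + w₂)
    (hw₁le : w₁ ≤ a + 2) (hw₂le : w₂ ≤ a)
    (hcase : w₁ = a + 2 → w₂ = 0) :
    ∃ δ : ℤ,
      ((w₁ = a + 2 → δ = 1) ∧
       (w₁ ≤ a + 1 → w₂ ≤ w₁ → δ = 0) ∧
       (w₁ ≤ a + 1 → w₁ < w₂ → δ = -1)) ∧
      ⌊(-((a : ℝ) + 1) * w) / ((a : ℝ) ^ 2 + 3 * a + 3)⌋ = -(a + 1) * w₀ - w₁ + δ ∧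
      (-((a : ℝ) + 1) * w) / ((a : ℝ) ^ 2 + 3 * a + 3)
          - ⌊(-((a : ℝ) + 1) * w) / ((a : ℝ) ^ 2 + 3 * a + 3)⌋ =
        (((a : ℝ) + 2) * w₁ - ((a : ℝ) + 1) * w₂) / ((a : ℝ) ^ 2 + 3 * a + 3) - δ := by
  have hD : 0 < a ^ 2 + 3 * a + 3 := by nlinarith [sq_nonneg (2 * a + 3)]
  have hDℝ : (a : ℝ) ^ 2 + 3 * a + 3 ≠ 0 := by exact_mod_cast hD.ne'
  obtain ⟨hr₀, hrD⟩ := sub_carry_mul_mem_Ico hw₁ hw₂ hw₁le hw₂le hcase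
  have hfloor : ⌊(-((a : ℝ) + 1) * w) / ((a : ℝ) ^ 2 + 3 * a + 3)⌋
      = -(a + 1) * w₀ - w₁ + carry a w₁ w₂ := by
    have := Int.floor_intCast_div_intCast_of_eq_mul_add (α := ℝ) (n := -(a + 1) * w)
      (q := -(a + 1) * w₀ - w₁ + carry a w₁ w₂) hD (by rw [hdec]; ring) hr₀ hrD
    push_cast at this
    exact this
  refine ⟨carry a w₁ w₂, ⟨carry_of_eq, carry_of_le, carry_of_lt⟩, hfloor, ?_⟩
  rw [hfloor, hdec]
  push_cast
  rw [div_sub' hDℝ, div_sub' hDℝ, div_left_inj' hDℝ]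
  ring

theorem stmt_11 (a w w₀ w₁ w₂ : ℤ) (ha : 1 ≤ a) (hw : 1 ≤ w)
    (hw₀ : 0 ≤ w₀) (hw₁ : 0 ≤ w₁) (hw₂ : 0 ≤ w₂)
    (hdec : w = (a ^ 2 + 3 * a + 3) * w₀ + (a + 1) * w₁ + w₂)
    (hw₁le : w₁ ≤ a + 2) (hw₂le : w₂ ≤ a)
    (hcase : w₁ = a + 2 → w₂ = 0) :
    ∃ δ : ℤ,
      ((w₁ = a + 2 → δ = 1) ∧
       (w₁ ≤ a + 1 → w₂ ≤ w₁ → δ = 0) ∧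
       (w₁ ≤ a + 1 → w₁ < w₂ → δ = -1)) ∧
      ⌊(-((a : ℝ) + 1) * w) / ((a : ℝ) ^ 2 + 3 * a + 3)⌋ = -(a + 1) * w₀ - w₁ + δ ∧
      (-((a : ℝ) + 1) * w) / ((a : ℝ) ^ 2 + 3 * a + 3)
          - ⌊(-((a : ℝ) + 1) * w) / ((a : ℝ) ^ 2 + 3 * a + 3)⌋ =
        (((a : ℝ) + 2) * w₁ - ((a : ℝ) + 1) * w₂) / ((a : ℝ) ^ 2 + 3 * a + 3) - δ :=
  stmt_11_general a w w₀ w₁ w₂ hw₁ hw₂ hdec hw₁le hw₂le hcase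
end

section
/- Let a ≥ 1 and w ≥ 1 be integers, and let w₀, w₁, w₂ ≥ 0 be integers with w = (a² + 3a + 3)·w₀ + (a+2)·w₁ + w₂, w₁ ≤ a + 1, w₂ ≤ a + 1, and w₂ = 0 whenever w₁ = a + 1. Then ⌊−(a+1)·w/(a² + 3a + 3)⌋ = −(a+1)·w₀ − w₁ + δ, where δ = 0 if w₂ = 0 and δ = −1 if w₂ ≥ 1. Moreover, −(a+1)·w/(a² + 3a + 3) − ⌊−(a+1)·w/(a² + 3a + 3)⌋ equals w₁/(a² + 3a + 3) if w₂ = 0, and equals 1 + (w₁ − (a+1)·w₂)/(a² + 3a + 3) if w₂ ≥ 1. -/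
/-!
Since `(a + 1) * (a + 2) = (a ^ 2 + 3 * a + 3) - 1`, the integer `-(a + 1) * w` equals
`(a ^ 2 + 3 * a + 3) * (-(a + 1) * w₀ - w₁) + (w₁ - (a + 1) * w₂)`. For `w₂ = 0` the last summand is
a genuine remainder in `[0, a ^ 2 + 3 * a + 3)`; for `w₂ ≥ 1` it is negative (as then `w₁ ≤ a`)
but larger than `-(a ^ 2 + 3 * a + 3)`, so one borrows a single unit from the quotient.
-/

theorem intCast_div_eq_add_of_eq_mul_add {K : Type*} [Field K] [CharZero K] {n d q r : ℤ}
    (h : n = d * q + r) (hd : d ≠ 0) : (n : K) / d = q + (r : K) / d := by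
  rw [h]; push_cast; field_simp

section FloorDiv

variable {K : Type*} [Field K] [LinearOrder K] [IsStrictOrderedRing K] [FloorRing K]
  {n d q r : ℤ}

theorem floor_intCast_div_of_eq_mul_add (h : n = d * q + r) (hr₀ : 0 ≤ r) (hrd : r < d) :
    ⌊(n : K) / d⌋ = q := by
  have hd : (0 : K) < d := by exact_mod_cast hr₀.trans_lt hrd
  rw [intCast_div_eq_add_of_eq_mul_add h (by omega), Int.floor_intCast_add, add_eq_left,
    Int.floor_eq_zero_iff, Set.mem_Ico, div_lt_one hd]
  exact ⟨div_nonneg (by exact_mod_cast hr₀) hd.le, by exact_mod_cast hrd⟩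

theorem intCast_div_sub_floor_of_eq_mul_add (h : n = d * q + r) (hr₀ : 0 ≤ r) (hrd : r < d) :
    (n : K) / d - ⌊(n : K) / d⌋ = (r : K) / d := by
  rw [floor_intCast_div_of_eq_mul_add h hr₀ hrd, intCast_div_eq_add_of_eq_mul_add h (by omega)]
  ring

end FloorDiv

theorem stmt_13_general (a w w₀ w₁ w₂ : ℤ)
    (hw₁ : 0 ≤ w₁)
    (hdec : w = (a ^ 2 + 3 * a + 3) * w₀ + (a + 2) * w₁ + w₂)
    (hw₁le : w₁ ≤ a + 1) (hw₂le : w₂ ≤ a + 1)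
    (hcase : w₁ = a + 1 → w₂ = 0) :
    (w₂ = 0 →
      ⌊(-((a : ℝ) + 1) * w) / ((a : ℝ) ^ 2 + 3 * a + 3)⌋ = -(a + 1) * w₀ - w₁ ∧
      (-((a : ℝ) + 1) * w) / ((a : ℝ) ^ 2 + 3 * a + 3)
          - ⌊(-((a : ℝ) + 1) * w) / ((a : ℝ) ^ 2 + 3 * a + 3)⌋ =
        (w₁ : ℝ) / ((a : ℝ) ^ 2 + 3 * a + 3)) ∧
    (1 ≤ w₂ →
      ⌊(-((a : ℝ) + 1) * w) / ((a : ℝ) ^ 2 + 3 * a + 3)⌋ = -(a + 1) * w₀ - w₁ - 1 ∧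
      (-((a : ℝ) + 1) * w) / ((a : ℝ) ^ 2 + 3 * a + 3)
          - ⌊(-((a : ℝ) + 1) * w) / ((a : ℝ) ^ 2 + 3 * a + 3)⌋ =
        1 + ((w₁ : ℝ) - ((a : ℝ) + 1) * w₂) / ((a : ℝ) ^ 2 + 3 * a + 3)) := by
  have hdiv : -(a + 1) * w = (a ^ 2 + 3 * a + 3) * (-(a + 1) * w₀ - w₁) + (w₁ - (a + 1) * w₂) := by
    rw [hdec]; ring
  have hcast : (-((a : ℝ) + 1) * w) / ((a : ℝ) ^ 2 + 3 * a + 3) =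
      ((-(a + 1) * w : ℤ) : ℝ) / ((a ^ 2 + 3 * a + 3 : ℤ) : ℝ) := by push_cast; ring
  rw [hcast]
  constructor
  · rintro rfl
    rw [mul_zero, sub_zero] at hdiv
    have hw₁D : w₁ < a ^ 2 + 3 * a + 3 := by nlinarith
    refine ⟨floor_intCast_div_of_eq_mul_add hdiv hw₁ hw₁D, ?_⟩
    rw [intCast_div_sub_floor_of_eq_mul_add hdiv hw₁ hw₁D]
    push_cast; ring
  · intro hw₂
    have hw₁a : w₁ ≤ a := by
      by_contra! h
      have := hcase (by omega)
      omega
    have hdiv' : -(a + 1) * w =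
        (a ^ 2 + 3 * a + 3) * (-(a + 1) * w₀ - w₁ - 1) + (a ^ 2 + 3 * a + 3 + w₁ - (a + 1) * w₂) := by
      rw [hdiv]; ring
    have hr₀ : 0 ≤ a ^ 2 + 3 * a + 3 + w₁ - (a + 1) * w₂ := by nlinarith
    have hrD : a ^ 2 + 3 * a + 3 + w₁ - (a + 1) * w₂ < a ^ 2 + 3 * a + 3 := by nlinarith
    refine ⟨floor_intCast_div_of_eq_mul_add hdiv' hr₀ hrD, ?_⟩
    rw [intCast_div_sub_floor_of_eq_mul_add hdiv' hr₀ hrD]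
    have hD : (0 : ℝ) < (a : ℝ) ^ 2 + 3 * a + 3 := by nlinarith [sq_nonneg ((a : ℝ) + 1)]
    push_cast
    rw [add_sub_assoc, add_div, div_self hD.ne']

theorem stmt_13 (a w w₀ w₁ w₂ : ℤ) (ha : 1 ≤ a) (hw : 1 ≤ w)
    (hw₀ : 0 ≤ w₀) (hw₁ : 0 ≤ w₁) (hw₂ : 0 ≤ w₂)
    (hdec : w = (a ^ 2 + 3 * a + 3) * w₀ + (a + 2) * w₁ + w₂)
    (hw₁le : w₁ ≤ a + 1) (hw₂le : w₂ ≤ a + 1)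
    (hcase : w₁ = a + 1 → w₂ = 0) :
    (w₂ = 0 →
      ⌊(-((a : ℝ) + 1) * w) / ((a : ℝ) ^ 2 + 3 * a + 3)⌋ = -(a + 1) * w₀ - w₁ ∧
      (-((a : ℝ) + 1) * w) / ((a : ℝ) ^ 2 + 3 * a + 3)
          - ⌊(-((a : ℝ) + 1) * w) / ((a : ℝ) ^ 2 + 3 * a + 3)⌋ =
        (w₁ : ℝ) / ((a : ℝ) ^ 2 + 3 * a + 3)) ∧
    (1 ≤ w₂ →
      ⌊(-((a : ℝ) + 1) * w) / ((a : ℝ) ^ 2 + 3 * a + 3)⌋ = -(a + 1) * w₀ - w₁ - 1 ∧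
      (-((a : ℝ) + 1) * w) / ((a : ℝ) ^ 2 + 3 * a + 3)
          - ⌊(-((a : ℝ) + 1) * w) / ((a : ℝ) ^ 2 + 3 * a + 3)⌋ =
        1 + ((w₁ : ℝ) - ((a : ℝ) + 1) * w₂) / ((a : ℝ) ^ 2 + 3 * a + 3)) :=
  stmt_13_general a w w₀ w₁ w₂ hw₁ hdec hw₁le hw₂le hcase
end
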